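/- arXiv:2011.07879 — 4 statements merged into one kernel-verified Lean document; each statement's English description precedes it below -/
import Mathlib

section
/- Let A be a finite idempotent algebra. Suppose that for every pair of triples (s0, s1) ∈ (A² × {0,1})² there is a single ternary term of A that is a local difference term operation for both s0 and s1. Then for every subset S ⊆ A² × {0,1} there is a ternary term of A that is a local difference term operation for S. -/
open FirstOrder FirstOrder.Language FirstOrder.Language.Structure

/-- A congruence on an `L`-structure: an equivalence relation preserved by every
basic operation. -/
def IsCong (L : FirstOrder.Language) (A : Type*) [L.Structure A] (r : A → A → Prop) : Prop :=
  Equivalence r ∧ ∀ (n : ℕ) (f : L.Functions n) (x y : Fin n → A),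
    (∀ i, r (x i) (y i)) → r (funMap f x) (funMap f y)

/-- The congruence generated by a set of pairs: the intersection of all congruences
containing the set. -/
def cgSet (L : FirstOrder.Language) (A : Type*) [L.Structure A] (s : Set (A × A)) :
    A → A → Prop :=
  fun x y => ∀ r : A → A → Prop, IsCong L A r → (∀ p ∈ s, r p.1 p.2) → r x y

/-- `Cg^A(a,b)`: the least congruence containing `(a,b)`. -/
def cgPair (L : FirstOrder.Language) (A : Type*) [L.Structure A] (a b : A) : A → A → Prop :=
  cgSet L A {(a, b)}

/-- The term condition `C(α,β;δ)`. -/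
def TermCond (L : FirstOrder.Language) (A : Type*) [L.Structure A]
    (α β δ : A → A → Prop) : Prop :=
  ∀ (n : ℕ) (t : L.Term (Fin (n + 1))) (a a' : A), α a a' →
    ∀ u v : Fin n → A, (∀ i, β (u i) (v i)) →
      δ (t.realize (Fin.cons a u)) (t.realize (Fin.cons a v)) →
      δ (t.realize (Fin.cons a' u)) (t.realize (Fin.cons a' v))

/-- The commutator `[α,β]`: the least congruence `δ` such that `C(α,β;δ)` holds
(the intersection of all such `δ`). -/
def commut (L : FirstOrder.Language) (A : Type*) [L.Structure A] (α β : A → A → Prop) :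
    A → A → Prop :=
  fun x y => ∀ δ : A → A → Prop, IsCong L A δ → TermCond L A α β δ → δ x y

/-- An algebra is idempotent if every basic operation satisfies `f(a,…,a) = a`. -/
def IsIdem (L : FirstOrder.Language) (A : Type*) [L.Structure A] : Prop :=
  ∀ (n : ℕ) (f : L.Functions n) (a : A), funMap f (fun _ => a) = a

/-- A ternary term `d` is a difference term operation for `A` if `d(a,a,b) = b` and
`(a, d(a,b,b)) ∈ [θ,θ]` where `θ = Cg^A(a,b)`. -/
def IsDTO (L : FirstOrder.Language) (A : Type*) [L.Structure A] (d : L.Term (Fin 3)) : Prop :=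
  ∀ a b : A, d.realize ![a, a, b] = b ∧
    commut L A (cgPair L A a b) (cgPair L A a b) a (d.realize ![a, b, b])

/-- A local difference term operation for a triple `(a, b, i) ∈ A² × {0,1}`
(`i = 1` is encoded as `true`). -/
def IsLDTO (L : FirstOrder.Language) (A : Type*) [L.Structure A] (t : L.Term (Fin 3))
    (s : A × A × Bool) : Prop :=
  if s.2.2 then t.realize ![s.1, s.1, s.2.1] = s.2.1
  else commut L A (cgPair L A s.1 s.2.1) (cgPair L A s.1 s.2.1) s.1
    (t.realize ![s.1, s.2.1, s.2.1])

/-- The coordinatewise `L`-structure on a product. -/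
def prodStructure (L : FirstOrder.Language) (A B : Type*) [L.Structure A] [L.Structure B] :
    L.Structure (A × B) where
  funMap f x := (funMap f fun i => (x i).1, funMap f fun i => (x i).2)
  RelMap r x := RelMap r (fun i => (x i).1) ∧ RelMap r (fun i => (x i).2)

/-- The quotient structure on `Quotient s` induced by the structure on `A`. -/
noncomputable def quotStructure (L : FirstOrder.Language) (A : Type*) [L.Structure A] (s : Setoid A) :
    L.Structure (Quotient s) where
  funMap f x := ⟦funMap f fun i => (x i).out⟧
  RelMap r x := RelMap r fun i => (x i).out

/-!
Two compositions of ternary terms, `(d ⋆ e)(x,y,z) = d(e(x,y,z), e(y,y,z), z)` and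
`(d • e)(x,y,z) = d(x, e(x,y,y), e(x,y,z))`, absorb the triples one at a time, which suffices
as `A` is finite. If `e` works for `s₀` and `d` works for `s₀` and `(e(a,a,b), b, 1)` (the pair
hypothesis), then `d ⋆ e` works for `s₀`, for `(a,b,1)`, and, by idempotence, for every
`(a',b',1)` that `e` works for; so every `s₀` is served by a term that also works for all
`(a,b,1)`. If `e` and `d` work for all `(a,b,1)` and `d` also for `(a, e(a,b,b), 0)`, then
`d • e` works for all `(a,b,1)`, for every `(a',b',0)` that `e` works for, and for `(a,b,0)`,
because `Cg(a, e(a,b,b)) ≤ Cg(a,b)` by idempotence. The end result is a difference term.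
-/

section

variable {L : FirstOrder.Language} {A : Type*} [L.Structure A]

theorem exists_forall_of_absorb {α β : Type*} [Finite β] (P : α → Prop) (Q : α → β → Prop)
    (hP : ∃ x, P x) (habsorb : ∀ x, P x → ∀ b, ∃ y, P y ∧ Q y b ∧ ∀ b', Q x b' → Q y b') :
    ∃ x, P x ∧ ∀ b, Q x b := by
  classical
  have := Fintype.ofFinite β
  suffices ∀ F : Finset β, ∃ x, P x ∧ ∀ b ∈ F, Q x b by
    obtain ⟨x, hx, hQ⟩ := this Finset.univ
    exact ⟨x, hx, fun b => hQ b (Finset.mem_univ b)⟩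
  intro F
  induction F using Finset.induction_on with
  | empty => exact hP.imp fun x hx => ⟨hx, by simp⟩
  | insert b F _ ih =>
    obtain ⟨x, hx, hxF⟩ := ih
    obtain ⟨y, hy, hyb, hxy⟩ := habsorb x hx b
    exact ⟨y, hy, Finset.forall_mem_insert .. |>.mpr ⟨hyb, fun b' hb' => hxy b' (hxF b' hb')⟩⟩

theorem IsCong.realize_term {r : A → A → Prop} (hr : IsCong L A r) {α : Type*} (t : L.Term α)
    {x y : α → A} (h : ∀ i, r (x i) (y i)) : r (t.realize x) (t.realize y) := by
  induction t with
  | var i => exact h i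
  | func f ts ih => exact hr.2 _ f _ _ ih

theorem IsCong.realize_vec3 {r : A → A → Prop} (hr : IsCong L A r) (t : L.Term (Fin 3))
    {x₀ x₁ x₂ y₀ y₁ y₂ : A} (h₀ : r x₀ y₀) (h₁ : r x₁ y₁) (h₂ : r x₂ y₂) :
    r (t.realize ![x₀, x₁, x₂]) (t.realize ![y₀, y₁, y₂]) :=
  hr.realize_term t fun i => by fin_cases i <;> assumption

theorem IsIdem.realize_const (hid : IsIdem L A) {α : Type*} (t : L.Term α) (a : A) :
    t.realize (fun _ => a) = a := by
  induction t with
  | var i => rfl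
  | func f ts ih =>
    simp only [Term.realize_func, ih]
    exact hid _ f a

theorem IsIdem.realize_vec3 (hid : IsIdem L A) (t : L.Term (Fin 3)) (a : A) :
    t.realize ![a, a, a] = a := by
  convert hid.realize_const t a using 2
  ext i
  fin_cases i <;> rfl

theorem isCong_cgSet (s : Set (A × A)) : IsCong L A (cgSet L A s) :=
  ⟨⟨fun x _ hr _ => hr.1.refl x,
    fun h r hr hs => hr.1.symm (h r hr hs),
    fun h₁ h₂ r hr hs => hr.1.trans (h₁ r hr hs) (h₂ r hr hs)⟩,
   fun n f _ _ h r hr hs => hr.2 n f _ _ fun i => h i r hr hs⟩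

theorem isCong_cgPair (a b : A) : IsCong L A (cgPair L A a b) := isCong_cgSet _

theorem cgPair_rel (a b : A) : cgPair L A a b a b := fun _ _ hs => hs (a, b) rfl

theorem cgPair_le {r : A → A → Prop} (hr : IsCong L A r) {a b : A} (hab : r a b) {x y : A}
    (hxy : cgPair L A a b x y) : r x y :=
  hxy r hr (by simpa using hab)

theorem isCong_commut (α β : A → A → Prop) : IsCong L A (commut L A α β) :=
  ⟨⟨fun x _ hδ _ => hδ.1.refl x,
    fun h δ hδ htc => hδ.1.symm (h δ hδ htc),
    fun h₁ h₂ δ hδ htc => hδ.1.trans (h₁ δ hδ htc) (h₂ δ hδ htc)⟩,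
   fun n f _ _ h δ hδ htc => hδ.2 n f _ _ fun i => h i δ hδ htc⟩

theorem commut_mono {α α' β β' : A → A → Prop} (hα : ∀ x y, α' x y → α x y)
    (hβ : ∀ x y, β' x y → β x y) {x y : A} (h : commut L A α' β' x y) :
    commut L A α β x y :=
  fun δ hδ htc => h δ hδ fun n t a a' haa u v huv =>
    htc n t a a' (hα _ _ haa) u v fun i => hβ _ _ (huv i)

theorem isLDTO_true_iff {t : L.Term (Fin 3)} {a b : A} :
    IsLDTO L A t (a, b, true) ↔ t.realize ![a, a, b] = b :=
  Iff.rfl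

theorem isLDTO_false_iff {t : L.Term (Fin 3)} {a b : A} :
    IsLDTO L A t (a, b, false) ↔
      commut L A (cgPair L A a b) (cgPair L A a b) a (t.realize ![a, b, b]) :=
  Iff.rfl

theorem IsDTO.isLDTO {d : L.Term (Fin 3)} (hd : IsDTO L A d) (s : A × A × Bool) :
    IsLDTO L A d s := by
  obtain ⟨a, b, _ | _⟩ := s
  exacts [(hd a b).2, (hd a b).1]

namespace FirstOrder.Language.Term

def star (d e : L.Term (Fin 3)) : L.Term (Fin 3) :=
  d.subst ![e, e.relabel ![1, 1, 2], var 2]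

def bullet (d e : L.Term (Fin 3)) : L.Term (Fin 3) :=
  d.subst ![var 0, e.relabel ![0, 1, 1], e]

theorem realize_relabel_vec3 (e : L.Term (Fin 3)) (i j k : Fin 3) (x : Fin 3 → A) :
    (e.relabel ![i, j, k]).realize x = e.realize ![x i, x j, x k] := by
  rw [realize_relabel]
  congr 1
  ext l
  fin_cases l <;> rfl

theorem realize_star (d e : L.Term (Fin 3)) (x y z : A) :
    (d.star e).realize ![x, y, z] =
      d.realize ![e.realize ![x, y, z], e.realize ![y, y, z], z] := by
  rw [star, realize_subst]
  congr 1
  ext i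
  fin_cases i
  · rfl
  · exact realize_relabel_vec3 e 1 1 2 _
  · rfl

theorem realize_bullet (d e : L.Term (Fin 3)) (x y z : A) :
    (d.bullet e).realize ![x, y, z] =
      d.realize ![x, e.realize ![x, y, y], (e.realize ![x, y, z])] := by
  rw [bullet, realize_subst]
  congr 1
  ext i
  fin_cases i
  · rfl
  · exact realize_relabel_vec3 e 0 1 1 _
  · rfl

end FirstOrder.Language.Term

open Term

section Compositions

variable (hid : IsIdem L A) {a b : A}
include hid

theorem isLDTO_star_of_right_true {e : L.Term (Fin 3)} (he : IsLDTO L A e (a, b, true))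
    (d : L.Term (Fin 3)) : IsLDTO L A (d.star e) (a, b, true) := by
  rw [isLDTO_true_iff] at *
  rw [realize_star, he, hid.realize_vec3]

theorem isLDTO_star_false {d e : L.Term (Fin 3)} (hd : IsLDTO L A d (a, b, false))
    (he : IsLDTO L A e (a, b, false)) : IsLDTO L A (d.star e) (a, b, false) := by
  rw [isLDTO_false_iff] at *
  rw [realize_star, hid.realize_vec3 e b]
  have hκ := isCong_commut (L := L) (cgPair L A a b) (cgPair L A a b)
  exact hκ.1.trans hd (hκ.realize_vec3 d he (hκ.1.refl b) (hκ.1.refl b))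

theorem isLDTO_bullet_true {d e : L.Term (Fin 3)} (hd : IsLDTO L A d (a, b, true))
    (he : IsLDTO L A e (a, b, true)) : IsLDTO L A (d.bullet e) (a, b, true) := by
  rw [isLDTO_true_iff] at *
  rwa [realize_bullet, hid.realize_vec3 e a, he]

theorem isLDTO_bullet_of_right_false {e : L.Term (Fin 3)} (he : IsLDTO L A e (a, b, false))
    (d : L.Term (Fin 3)) : IsLDTO L A (d.bullet e) (a, b, false) := by
  rw [isLDTO_false_iff] at *
  rw [realize_bullet]
  have hκ := isCong_commut (L := L) (cgPair L A a b) (cgPair L A a b)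
  have h := hκ.realize_vec3 d (hκ.1.refl a) he he
  rwa [hid.realize_vec3] at h

theorem isLDTO_bullet_false {d e : L.Term (Fin 3)}
    (hd : IsLDTO L A d (a, e.realize ![a, b, b], false)) :
    IsLDTO L A (d.bullet e) (a, b, false) := by
  rw [isLDTO_false_iff] at *
  rw [realize_bullet]
  have hθ := isCong_cgPair (L := L) a b
  have hae : cgPair L A a b a (e.realize ![a, b, b]) := by
    simpa [hid.realize_vec3] using
      hθ.realize_vec3 e (hθ.1.refl a) (cgPair_rel a b) (cgPair_rel a b)
  have hle : ∀ x y, cgPair L A a (e.realize ![a, b, b]) x y → cgPair L A a b x y :=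
    fun _ _ => cgPair_le hθ hae
  exact commut_mono hle hle hd

end Compositions

section Absorption

variable [Finite A] (hid : IsIdem L A)
  (hpairs : ∀ s₀ s₁ : A × A × Bool, ∃ t : L.Term (Fin 3), IsLDTO L A t s₀ ∧ IsLDTO L A t s₁)
include hid hpairs

theorem exists_isLDTO_and_forall_true (s₀ : A × A × Bool) :
    ∃ p : L.Term (Fin 3), IsLDTO L A p s₀ ∧ ∀ q : A × A, IsLDTO L A p (q.1, q.2, true) := by
  refine exists_forall_of_absorb _ _ ((hpairs s₀ s₀).imp fun _ h => h.1) ?_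
  rintro p hp ⟨a, b⟩
  obtain ⟨d, hd, hds₀⟩ := hpairs (p.realize ![a, a, b], b, true) s₀
  refine ⟨d.star p, ?_, ?_, fun q hq => isLDTO_star_of_right_true hid hq d⟩
  · obtain ⟨x, y, _ | _⟩ := s₀
    exacts [isLDTO_star_false hid hds₀ hp, isLDTO_star_of_right_true hid hp d]
  · rwa [isLDTO_true_iff, realize_star]

theorem exists_isDTO : ∃ d : L.Term (Fin 3), IsDTO L A d := by
  obtain ⟨d, hd₁, hd₀⟩ := exists_forall_of_absorb
    (fun p : L.Term (Fin 3) => ∀ q : A × A, IsLDTO L A p (q.1, q.2, true))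
    (fun p (q : A × A) => IsLDTO L A p (q.1, q.2, false)) ⟨var 2, fun _ => rfl⟩ (by
      rintro e he ⟨a, b⟩
      obtain ⟨d, hd, hd₁⟩ :=
        exists_isLDTO_and_forall_true hid hpairs (a, e.realize ![a, b, b], false)
      exact ⟨d.bullet e, fun q => isLDTO_bullet_true hid (hd₁ q) (he q),
        isLDTO_bullet_false hid hd, fun q hq => isLDTO_bullet_of_right_false hid hq d⟩)
  exact ⟨d, fun a b => ⟨hd₁ (a, b), hd₀ (a, b)⟩⟩

end Absorption

end

theorem stmt0_general {L : FirstOrder.Language} (A : Type*) [L.Structure A] [Finite A]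
    (hidem : IsIdem L A)
    (hpairs : ∀ s₀ s₁ : A × A × Bool,
      ∃ t : L.Term (Fin 3), IsLDTO L A t s₀ ∧ IsLDTO L A t s₁) :
    ∀ S : Set (A × A × Bool), ∃ t : L.Term (Fin 3), ∀ s ∈ S, IsLDTO L A t s := by
  obtain ⟨d, hd⟩ := exists_isDTO hidem hpairs
  exact fun _ => ⟨d, fun s _ => hd.isLDTO s⟩

theorem stmt0 {L : FirstOrder.Language} [L.IsAlgebraic] (A : Type*) [L.Structure A] [Finite A]
    (hidem : IsIdem L A)
    (hpairs : ∀ s₀ s₁ : A × A × Bool,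
      ∃ t : L.Term (Fin 3), IsLDTO L A t s₀ ∧ IsLDTO L A t s₁) :
    ∀ S : Set (A × A × Bool), ∃ t : L.Term (Fin 3), ∀ s ∈ S, IsLDTO L A t s :=
  stmt0_general A hidem hpairs
end

section
/- Let A be a finite idempotent algebra, let a, b, a', b' ∈ A, and set δ = [Cg^A(a,b), Cg^A(a,b)]. Then there exists a ternary term of A that is a local difference term operation for both (a,b,0) and (a',b',1) if and only if the subalgebra of A × A generated by {(a,a'), (b,a'), (b,b')} contains an element of (a/δ) × {b'}, where a/δ denotes the δ-class of a. -/
open FirstOrder FirstOrder.Language FirstOrder.Language.Structure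

/-!
The subalgebra of `A × A` generated by `(a,a'), (b,a'), (b,b')` consists exactly of the
pairs `(t(a,b,b), t(a',a',b'))` for ternary terms `t`, since term operations act
coordinatewise on a product. An element of `(a/δ) × {b'}` is therefore the same thing as a
term `t` with `(a, t(a,b,b)) ∈ δ` and `t(a',a',b') = b'`, i.e. a local difference term for
both `(a,b,0)` and `(a',b',1)`.
-/

theorem Term.realize_prodStructure {L : FirstOrder.Language} {A B : Type*} [L.Structure A]
    [L.Structure B] {α : Type*} (t : L.Term α) (v : α → A × B) :
    (letI := prodStructure L A B; t.realize v) =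
      (t.realize (fun i => (v i).1), t.realize (fun i => (v i).2)) := by
  let _ := prodStructure L A B
  induction t with
  | var => rfl
  | func f ts ih =>
      simp only [Term.realize, ih]
      rfl

theorem Substructure.mem_closure_range_iff {L : FirstOrder.Language} {M : Type*}
    [L.Structure M] {α : Type*} (v : α → M) (x : M) :
    x ∈ Substructure.closure L (Set.range v) ↔ ∃ t : L.Term α, t.realize v = x := by
  constructor
  · rw [Substructure.mem_closure_iff_exists_term]
    rintro ⟨t, rfl⟩
    refine ⟨t.relabel (Set.rangeSplitting v), ?_⟩
    rw [Term.realize_relabel]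
    congr 1
    funext y
    exact Set.apply_rangeSplitting v y
  · rintro ⟨t, rfl⟩
    exact t.realize_mem _ fun i => Substructure.subset_closure (Set.mem_range_self i)

theorem stmt4_general {L : FirstOrder.Language} (A : Type*) [L.Structure A] (a b a' b' : A) :
    letI : L.Structure (A × A) := prodStructure L A A
    ((∃ t : L.Term (Fin 3), IsLDTO L A t (a, b, false) ∧ IsLDTO L A t (a', b', true)) ↔
      ∃ u : A × A, u ∈ Substructure.closure L {(a, a'), (b, a'), (b, b')} ∧
        u ∈ ({x | commut L A (cgPair L A a b) (cgPair L A a b) a x} ×ˢ {b'} : Set (A × A))) := by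
  let : L.Structure (A × A) := prodStructure L A A
  have hgen : ({(a, a'), (b, a'), (b, b')} : Set (A × A)) =
      Set.range ![(a, a'), (b, a'), (b, b')] := by
    simp only [Matrix.range_cons, Matrix.range_empty, Set.union_empty, Set.singleton_union]
  have hcoord (t : L.Term (Fin 3)) : t.realize ![(a, a'), (b, a'), (b, b')] =
      (t.realize ![a, b, b], t.realize ![a', a', b']) := by
    rw [Term.realize_prodStructure]
    congr <;> funext i <;> fin_cases i <;> rfl
  simp only [hgen, Substructure.mem_closure_range_iff]
  constructor
  · rintro ⟨t, h0, h1⟩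
    exact ⟨_, ⟨t, rfl⟩, by simpa [hcoord, IsLDTO] using And.intro h0 h1⟩
  · rintro ⟨_, ⟨t, rfl⟩, hmem⟩
    exact ⟨t, by simpa [hcoord, IsLDTO] using hmem⟩

theorem stmt4 {L : FirstOrder.Language} [L.IsAlgebraic] (A : Type*) [L.Structure A] [Finite A]
    (hidem : IsIdem L A) (a b a' b' : A) :
    letI : L.Structure (A × A) := prodStructure L A A
    ((∃ t : L.Term (Fin 3), IsLDTO L A t (a, b, false) ∧ IsLDTO L A t (a', b', true)) ↔
      ∃ u : A × A, u ∈ Substructure.closure L {(a, a'), (b, a'), (b, b')} ∧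
        u ∈ ({x | commut L A (cgPair L A a b) (cgPair L A a b) a x} ×ˢ {b'} : Set (A × A))) :=
  stmt4_general A a b a' b'
end

section
/- Let A be an idempotent algebra, let S' ⊆ A² × {0,1}, and let (a,b) ∈ A². Suppose p is a ternary term that is a local difference term operation for S', and q is a ternary term that is a local difference term operation for the set {(x,y,0) : (x,y,0) ∈ S'} ∪ {(p^A(a,a,b), b, 1)}. Then the ternary term d(x,y,z) := q(p(x,y,z), p(y,y,z), z) is a local difference term operation for S' ∪ {(a,b,1)}. -/
open FirstOrder FirstOrder.Language FirstOrder.Language.Structure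

/-!
On a triple `(x, y, 1)` of `S'` we get `d(x,x,y) = q(y,y,y) = y` by idempotence. On a triple
`(x, y, 0)` of `S'` idempotence gives `d(x,y,y) = q(p(x,y,y), y, y)`, which is `[θ,θ]`-related to
`q(x,y,y)` because `p(x,y,y) [θ,θ] x`, hence to `x`. Finally `d(a,a,b) = q(p(a,a,b), b, b)`,
which is `b` by the choice of `q`.
-/

namespace FirstOrder.Language.Term

variable {L : FirstOrder.Language} {A : Type*} [L.Structure A]

theorem realize_const_of_isIdem (hidem : IsIdem L A) {α : Type*} (t : L.Term α) (c : A) :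
    t.realize (fun _ => c) = c := by
  induction t with
  | var => rfl
  | func f ts ih =>
    simp only [Term.realize, ih]
    exact hidem _ f c

theorem realize_vec_const_of_isIdem (hidem : IsIdem L A) (t : L.Term (Fin 3)) (c : A) :
    t.realize ![c, c, c] = c := by
  convert t.realize_const_of_isIdem hidem c using 2
  ext j; fin_cases j <;> rfl

theorem realize_subst_vec_var (t : L.Term (Fin 3)) (v : Fin 3 → A) (i j k : Fin 3) :
    (t.subst ![var i, var j, var k]).realize v = t.realize ![v i, v j, v k] := by
  rw [realize_subst]
  congr 1
  funext l
  fin_cases l <;> rfl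

end FirstOrder.Language.Term

section

variable {L : FirstOrder.Language} {A : Type*} [L.Structure A]

def composeLDTO (p q : L.Term (Fin 3)) : L.Term (Fin 3) :=
  q.subst ![p.subst ![Term.var 0, Term.var 1, Term.var 2],
    p.subst ![Term.var 1, Term.var 1, Term.var 2], Term.var 2]

theorem realize_composeLDTO (p q : L.Term (Fin 3)) (x y z : A) :
    (composeLDTO p q).realize ![x, y, z] =
      q.realize ![p.realize ![x, y, z], p.realize ![y, y, z], z] := by
  rw [composeLDTO, Term.realize_subst]
  congr 1
  funext i
  fin_cases i
  exacts [p.realize_subst_vec_var _ 0 1 2, p.realize_subst_vec_var _ 1 1 2, rfl]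

theorem isLDTO_composeLDTO_true_of_isLDTO (hidem : IsIdem L A) {p : L.Term (Fin 3)}
    (q : L.Term (Fin 3)) {x y : A} (hp : IsLDTO L A p (x, y, true)) :
    IsLDTO L A (composeLDTO p q) (x, y, true) := by
  simp only [IsLDTO, if_true] at hp ⊢
  rw [realize_composeLDTO, hp, q.realize_vec_const_of_isIdem hidem]

theorem isLDTO_composeLDTO_false_of_isLDTO (hidem : IsIdem L A) {p q : L.Term (Fin 3)}
    {x y : A} (hp : IsLDTO L A p (x, y, false)) (hq : IsLDTO L A q (x, y, false)) :
    IsLDTO L A (composeLDTO p q) (x, y, false) := by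
  simp only [IsLDTO, Bool.false_eq_true, if_false] at hp hq ⊢
  have hc := isCong_commut (L := L) (cgPair L A x y) (cgPair L A x y)
  rw [realize_composeLDTO, p.realize_vec_const_of_isIdem hidem]
  refine hc.1.trans hq (hc.realize_term q fun j => ?_)
  fin_cases j
  exacts [hp, hc.1.refl y, hc.1.refl y]

theorem isLDTO_composeLDTO_true_of_isLDTO_realize (p : L.Term (Fin 3)) {q : L.Term (Fin 3)}
    {a b : A} (hq : IsLDTO L A q (p.realize ![a, a, b], b, true)) :
    IsLDTO L A (composeLDTO p q) (a, b, true) := by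
  simp only [IsLDTO, if_true] at hq ⊢
  rwa [realize_composeLDTO]

end

theorem stmt7_general {L : FirstOrder.Language} (A : Type*) [L.Structure A]
    (hidem : IsIdem L A) (S' : Set (A × A × Bool)) (a b : A) (p q : L.Term (Fin 3))
    (hp : ∀ s ∈ S', IsLDTO L A p s)
    (hq : ∀ s ∈ ({s : A × A × Bool | s ∈ S' ∧ s.2.2 = false} ∪
        {(p.realize ![a, a, b], b, true)} : Set (A × A × Bool)),
      IsLDTO L A q s) :
    ∀ s ∈ S' ∪ {(a, b, true)},
      IsLDTO L A
        (q.subst ![p.subst ![Term.var 0, Term.var 1, Term.var 2],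
          p.subst ![Term.var 1, Term.var 1, Term.var 2], Term.var 2]) s := by
  rintro ⟨x, y, _ | _⟩ (hs | hs)
  · exact isLDTO_composeLDTO_false_of_isLDTO hidem (hp _ hs) (hq _ (Or.inl ⟨hs, rfl⟩))
  · cases hs
  · exact isLDTO_composeLDTO_true_of_isLDTO hidem q (hp _ hs)
  · obtain ⟨rfl, rfl⟩ : x = a ∧ y = b := by simpa using hs
    exact isLDTO_composeLDTO_true_of_isLDTO_realize p (hq _ (Or.inr rfl))

theorem stmt7 {L : FirstOrder.Language} [L.IsAlgebraic] (A : Type*) [L.Structure A]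
    (hidem : IsIdem L A) (S' : Set (A × A × Bool)) (a b : A) (p q : L.Term (Fin 3))
    (hp : ∀ s ∈ S', IsLDTO L A p s)
    (hq : ∀ s ∈ ({s : A × A × Bool | s ∈ S' ∧ s.2.2 = false} ∪
        {(p.realize ![a, a, b], b, true)} : Set (A × A × Bool)),
      IsLDTO L A q s) :
    ∀ s ∈ S' ∪ {(a, b, true)},
      IsLDTO L A
        (q.subst ![p.subst ![Term.var 0, Term.var 1, Term.var 2],
          p.subst ![Term.var 1, Term.var 1, Term.var 2], Term.var 2]) s :=
  stmt7_general A hidem S' a b p q hp hq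
end

section
/- Let A be a finite idempotent algebra such that every subalgebra of A generated by two elements has a difference term operation. Then no member of HS(A) is a two-element algebra all of whose term operations are projections; that is, there do not exist a subalgebra B of A and a congruence γ of B such that the quotient B/γ has exactly two elements and every term operation of B/γ is a projection operation. -/
open FirstOrder FirstOrder.Language FirstOrder.Language.Structure

/-! Let `p ≠ q` be the two classes of `B/γ` and `C ≤ B` the subalgebra generated by
representatives of them, with difference term `d`. Every term operation of `B/γ` is a
projection, so `B/γ` is abelian: the kernel of `C → B/γ` satisfies the term condition
`C(θ,θ; ker)` and hence contains `[θ,θ]`. Thus in `B/γ` the projection `d` satisfies both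
`d(p,p,q) = q` and `d(p,q,q) = p`, which no projection does. -/

def HasOnlyProjections (L : FirstOrder.Language) (Q : Type*) [L.Structure Q] : Prop :=
  ∀ (n : ℕ) (t : L.Term (Fin n)), ∃ i : Fin n, ∀ v : Fin n → Q, t.realize v = v i

section Kernel

variable {L : FirstOrder.Language} {C Q : Type*} [L.Structure C] [L.Structure Q]

theorem isCong_ker (φ : C →[L] Q) : IsCong L C (fun a b => φ a = φ b) := by
  refine ⟨⟨fun _ => rfl, Eq.symm, Eq.trans⟩, fun n f x y h => ?_⟩
  simp only [HomClass.map_fun]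
  exact congrArg _ (funext h)

theorem termCond_ker_of_hasOnlyProjections (hQ : HasOnlyProjections L Q) (φ : C →[L] Q)
    (α β : C → C → Prop) : TermCond L C α β (fun a b => φ a = φ b) := by
  intro n t a a' _ u v _ h
  obtain ⟨j, hj⟩ := hQ (n + 1) t
  simp only [← HomClass.realize_term, hj] at h ⊢
  cases j using Fin.cases with
  | zero => rfl
  | succ k => simpa using h

theorem commut_le_ker_of_hasOnlyProjections (hQ : HasOnlyProjections L Q) (φ : C →[L] Q)
    {α β : C → C → Prop} {a b : C} (h : commut L C α β a b) : φ a = φ b :=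
  h _ (isCong_ker φ) (termCond_ker_of_hasOnlyProjections hQ φ α β)

theorem FirstOrder.Language.Hom.apply_eq_of_isDTO (hQ : HasOnlyProjections L Q) (φ : C →[L] Q)
    {d : L.Term (Fin 3)} (hd : IsDTO L C d) (a b : C) : φ a = φ b := by
  obtain ⟨haab, habb⟩ := hd a b
  obtain ⟨i, hi⟩ := hQ 3 d
  have hb : φ b = φ (![a, a, b] i) :=
    calc φ b = φ (d.realize ![a, a, b]) := by rw [haab]
      _ = d.realize (φ ∘ ![a, a, b]) := (HomClass.realize_term φ).symm
      _ = φ (![a, a, b] i) := hi _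
  have ha : φ a = φ (![a, b, b] i) :=
    calc φ a = φ (d.realize ![a, b, b]) := commut_le_ker_of_hasOnlyProjections hQ φ habb
      _ = d.realize (φ ∘ ![a, b, b]) := (HomClass.realize_term φ).symm
      _ = φ (![a, b, b] i) := hi _
  fin_cases i
  exacts [hb.symm, hb.symm, ha]

end Kernel

noncomputable def IsCong.quotientHom {L : FirstOrder.Language} [L.IsAlgebraic] {B : Type*}
    [L.Structure B] {s : Setoid B} (hs : IsCong L B s.r) :
    letI := quotStructure L B s
    B →[L] Quotient s :=
  letI := quotStructure L B s
  { toFun := Quotient.mk s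
    map_fun' := fun f x =>
      Quotient.sound (hs.2 _ f _ _ fun i => Setoid.symm (Quotient.mk_out (x i)))
    map_rel' := fun r => isEmptyElim r }

theorem stmt12_general {L : FirstOrder.Language} [L.IsAlgebraic] (A : Type*) [L.Structure A]
    (h2gen : ∀ a b : A, ∃ d : L.Term (Fin 3),
      IsDTO L (↥(Substructure.closure L {a, b} : L.Substructure A)) d) :
    ¬ ∃ (B : L.Substructure A) (γ : ↥B → ↥B → Prop) (hγ : IsCong L (↥B) γ),
      letI : L.Structure (Quotient (Setoid.mk γ hγ.1)) := quotStructure L (↥B) (Setoid.mk γ hγ.1)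
      Nat.card (Quotient (Setoid.mk γ hγ.1)) = 2 ∧
        ∀ (n : ℕ) (t : L.Term (Fin n)), ∃ i : Fin n,
          ∀ v : Fin n → Quotient (Setoid.mk γ hγ.1), t.realize v = v i := by
  rintro ⟨B, γ, hγ, hcard, hproj⟩
  let _ := quotStructure L B (Setoid.mk γ hγ.1)
  obtain ⟨p, q, hpq, -⟩ := Nat.card_eq_two_iff.mp hcard
  obtain ⟨d, hd⟩ := h2gen p.out q.out
  set C := Substructure.closure L {(p.out : A), (q.out : A)}
  have hCB : C ≤ B := Substructure.closure_le.mpr (by simp [Set.insert_subset_iff])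
  let φ := (IsCong.quotientHom (s := Setoid.mk γ hγ.1) hγ).comp (Substructure.inclusion hCB).toHom
  apply hpq
  calc p = φ ⟨p.out, Substructure.subset_closure (by simp)⟩ := (Quotient.out_eq p).symm
    _ = φ ⟨q.out, Substructure.subset_closure (by simp)⟩ := φ.apply_eq_of_isDTO hproj hd _ _
    _ = q := Quotient.out_eq q

theorem stmt12 {L : FirstOrder.Language} [L.IsAlgebraic] (A : Type*) [L.Structure A] [Finite A]
    (hidem : IsIdem L A)
    (h2gen : ∀ a b : A, ∃ d : L.Term (Fin 3),
      IsDTO L (↥(Substructure.closure L {a, b} : L.Substructure A)) d) :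
    ¬ ∃ (B : L.Substructure A) (γ : ↥B → ↥B → Prop) (hγ : IsCong L (↥B) γ),
      letI : L.Structure (Quotient (Setoid.mk γ hγ.1)) := quotStructure L (↥B) (Setoid.mk γ hγ.1)
      Nat.card (Quotient (Setoid.mk γ hγ.1)) = 2 ∧
        ∀ (n : ℕ) (t : L.Term (Fin n)), ∃ i : Fin n,
          ∀ v : Fin n → Quotient (Setoid.mk γ hγ.1), t.realize v = v i :=
  stmt12_general A h2gen
end
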